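/- arXiv:1205.4753 — 3 statements merged into one kernel-verified Lean document; each statement's English description precedes it below -/
import Mathlib

section
/- There exists a universal constant C > 0 such that for all integers 1 ≤ k < n and all x ∈ [0,1] the following holds. Set y_{n,k} = (n−k)/(n−1), ε = (x − y_{n,k})/y_{n,k}, and q = n^{3/2} k^{-3/2} (n−k)^{-1/2}. Then (1/k)·C(n,k)·x^{n-k}(1-x)^{k-1} ≤ (C·q/k)·exp( − min{|ε|, 1/4}² · (n−k) / 4 ), where C(n,k) is the binomial coefficient n choose k. -/
open Real Set
open scoped Nat

/-!
Put `m = n - k`, `j = k - 1` and `y = m / (m + j)`, the maximum point of `x ↦ x^m (1-x)^j`.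
Writing `x = y (1 + ε)`, the bound `1 + u ≤ eᵘ` gives `(1-x)^j ≤ (1-y)^j e^{-mε}`, hence
`x^m (1-x)^j ≤ y^m (1-y)^j ((1+ε) e^{-ε})^m`, and `log (1+ε) - ε ≤ -min(|ε|, 1/4)²/4` produces
the Gaussian factor. The value at the maximum is handled by Stirling's bounds
`√(2πk) (k/e)^k ≤ k! ≤ e √k (k/e)^k` together with `(1 + 1/N)^N ≤ e` and `j^j (j+1) ≤ (j+1)^(j+1)`:
`C(n,k) y^m (1-y)^j ≤ (e²/2π) n^{3/2} k^{-3/2} m^{-1/2}`, and `e² ≤ 4π`.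
-/

lemma log_one_add_le_sub_sq_div_four {t : ℝ} (ht₀ : -1 < t) (ht₁ : t ≤ 1) :
    log (1 + t) ≤ t - t ^ 2 / 4 := by
  set g : ℝ → ℝ := fun s => s - s ^ 2 / 4 - log (1 + s)
  have hg : ∀ s, -1 < s → HasDerivAt g (s * (1 - s) / (2 * (1 + s))) s := by
    intro s hs
    have hs' : 1 + s ≠ 0 := by linarith
    have h := ((hasDerivAt_id' s).fun_sub ((hasDerivAt_pow 2 s).div_const 4)).fun_sub
      (((hasDerivAt_id' s).const_add 1).log hs')
    refine h.congr_deriv ?_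
    field_simp
    ring
  have hcont : ∀ a b, -1 < a → ContinuousOn g (Icc a b) := fun a b ha s hs =>
    (hg s (by linarith [hs.1])).continuousAt.continuousWithinAt
  have hderiv : ∀ a b, -1 < a → ∀ s ∈ interior (Icc a b),
      HasDerivWithinAt g (s * (1 - s) / (2 * (1 + s))) (interior (Icc a b)) s := by
    intro a b ha s hs
    rw [interior_Icc] at hs
    exact (hg s (by linarith [hs.1])).hasDerivWithinAt
  suffices g 0 ≤ g t by simpa [g] using this
  rcases le_total t 0 with ht | ht
  · refine antitoneOn_of_hasDerivWithinAt_nonpos (convex_Icc t 0) (hcont t 0 ht₀)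
      (hderiv t 0 ht₀) (fun s hs => ?_) (left_mem_Icc.2 ht) (right_mem_Icc.2 ht) ht
    rw [interior_Icc] at hs
    obtain ⟨hs₁, hs₂⟩ := hs
    exact div_nonpos_of_nonpos_of_nonneg (mul_nonpos_of_nonpos_of_nonneg hs₂.le (by linarith))
      (by linarith)
  · refine monotoneOn_of_hasDerivWithinAt_nonneg (convex_Icc 0 t) (hcont 0 t (by norm_num))
      (hderiv 0 t (by norm_num)) (fun s hs => ?_) (left_mem_Icc.2 ht) (right_mem_Icc.2 ht) ht
    rw [interior_Icc] at hs
    obtain ⟨hs₁, hs₂⟩ := hs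
    exact div_nonneg (mul_nonneg hs₁.le (by linarith)) (by linarith)

lemma one_add_mul_exp_neg_le {t : ℝ} (ht : -1 ≤ t) :
    (1 + t) * exp (-t) ≤ exp (-(min |t| (1 / 4) ^ 2 / 4)) := by
  rcases ht.eq_or_lt with rfl | ht
  · norm_num; positivity
  rw [← exp_log (by linarith : 0 < 1 + t), ← exp_add, exp_le_exp]
  rcases le_or_gt t (1 / 4) with ht' | ht'
  · have hmin : min |t| (1 / 4) ^ 2 ≤ t ^ 2 := by
      rw [← sq_abs t]
      exact pow_le_pow_left₀ (le_min (abs_nonneg t) (by norm_num)) (min_le_left _ _) 2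
    linarith [log_one_add_le_sub_sq_div_four ht (by linarith)]
  · -- beyond `1/4`, compare with the value at `1/4` using `log u ≤ u - 1`
    have hsplit : log (1 + t) = log (1 + 1 / 4) + log (4 * (1 + t) / 5) := by
      rw [← log_mul (by norm_num) (by positivity)]
      ring_nf
    have h₁ := log_one_add_le_sub_sq_div_four (t := 1 / 4) (by norm_num) (by norm_num)
    have h₂ := log_le_sub_one_of_pos (by positivity : 0 < 4 * (1 + t) / 5)
    rw [min_eq_right (by rw [abs_of_pos (by linarith)]; exact ht'.le)]
    linarith

lemma one_sub_pow_le_mul_exp {m j : ℕ} (hmj : 0 < m + j) {x : ℝ} (hx : x ≤ 1) :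
    (1 - x) ^ j ≤ (j / (m + j)) ^ j * exp (-((m + j) * (x - m / (m + j)))) := by
  have hs : (0 : ℝ) < m + j := by exact_mod_cast hmj
  set t := ((m : ℝ) + j) * (x - m / (m + j))
  have hfactor : (1 - x) ^ j = (j / (m + j)) ^ j * (1 - t / j) ^ j := by
    rcases eq_or_ne j 0 with rfl | hj
    · simp
    rw [← mul_pow]
    congr 1
    simp only [t]
    field_simp
    ring
  have ht : t ≤ j := by
    simp only [t]
    rw [mul_sub, mul_div_cancel₀ _ hs.ne']
    nlinarith
  rw [hfactor]
  gcongr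
  exact one_sub_div_pow_le_exp_neg ht

lemma pow_mul_one_sub_pow_le_mul_exp {m j : ℕ} (hm : m ≠ 0) {x : ℝ} (hx₀ : 0 ≤ x) (hx₁ : x ≤ 1) :
    x ^ m * (1 - x) ^ j ≤ (m / (m + j)) ^ m * (j / (m + j)) ^ j *
      exp (-(min |(x - m / (m + j)) / (m / (m + j))| (1 / 4) ^ 2 * m / 4)) := by
  have hmj : 0 < m + j := by omega
  set y : ℝ := m / (m + j)
  set ε := (x - y) / y
  have hy : 0 < y := by positivity
  have hx : x = y * (1 + ε) := by simp only [ε]; field_simp; ring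
  have hε : -1 ≤ ε := by
    simp only [ε]
    rw [le_div_iff₀ hy]
    linarith
  have hshift : ((m : ℝ) + j) * (x - y) = m * ε := by
    simp only [ε, y]
    field_simp
  calc x ^ m * (1 - x) ^ j ≤ x ^ m * ((j / (m + j)) ^ j * exp (-(m * ε))) := by
        rw [← hshift]
        exact mul_le_mul_of_nonneg_left (one_sub_pow_le_mul_exp hmj hx₁) (by positivity)
    _ = y ^ m * (j / (m + j)) ^ j * ((1 + ε) * exp (-ε)) ^ m := by
        rw [show -(m * ε) = m * (-ε) by ring, exp_nat_mul, hx, mul_pow, mul_pow]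
        ring
    _ ≤ y ^ m * (j / (m + j)) ^ j * exp (-(min |ε| (1 / 4) ^ 2 / 4)) ^ m := by
        have hnonneg : 0 ≤ (1 + ε) * exp (-ε) := mul_nonneg (by linarith) (exp_pos _).le
        gcongr
        exact one_add_mul_exp_neg_le hε
    _ = _ := by
        rw [← exp_nat_mul]
        ring_nf

lemma factorial_le_exp_one_mul_sqrt_mul {n : ℕ} (hn : n ≠ 0) :
    (n ! : ℝ) ≤ exp 1 * √n * (n / exp 1) ^ n := by
  obtain ⟨p, rfl⟩ := Nat.exists_eq_succ_of_ne_zero hn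
  have h : Stirling.stirlingSeq (p + 1) ≤ Stirling.stirlingSeq 1 :=
    Stirling.stirlingSeq'_antitone (Nat.zero_le p)
  rw [Stirling.stirlingSeq_one, Stirling.stirlingSeq, div_le_iff₀ (by positivity)] at h
  calc ((p + 1) ! : ℝ) ≤ exp 1 / √2 * (√(2 * ↑(p + 1)) * (↑(p + 1) / exp 1) ^ (p + 1)) := h
    _ = _ := by
        rw [sqrt_mul (by norm_num)]
        field_simp

lemma two_pi_mul_sqrt_mul_choose_le (k m : ℕ) :
    2 * π * √k * √m * ((k + m).choose k : ℝ) * (k : ℝ) ^ k * (m : ℝ) ^ m ≤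
      exp 1 * √((k : ℝ) + m) * ((k : ℝ) + m) ^ (k + m) := by
  rcases eq_or_ne (k + m) 0 with hkm | hkm
  · obtain ⟨rfl, rfl⟩ : k = 0 ∧ m = 0 := by omega
    simp
  have hchoose : ((k + m).choose k : ℝ) * k ! * m ! = (k + m)! := by
    have := Nat.choose_mul_factorial_mul_factorial (Nat.le_add_right k m)
    rw [Nat.add_sub_cancel_left] at this
    exact_mod_cast this
  have hupper := factorial_le_exp_one_mul_sqrt_mul hkm
  push_cast at hupper
  calc 2 * π * √k * √m * ((k + m).choose k : ℝ) * (k : ℝ) ^ k * (m : ℝ) ^ m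
      = ((k + m).choose k : ℝ) * (√(2 * π * k) * (k / exp 1) ^ k) *
          (√(2 * π * m) * (m / exp 1) ^ m) * exp 1 ^ (k + m) := by
        rw [sqrt_mul' _ (Nat.cast_nonneg k), sqrt_mul' _ (Nat.cast_nonneg m), div_pow, div_pow,
          pow_add]
        field_simp
        rw [sq_sqrt (by positivity)]
        ring
    _ ≤ ((k + m).choose k : ℝ) * k ! * m ! * exp 1 ^ (k + m) := by
        gcongr
        · exact Stirling.le_factorial_stirling k
        · exact Stirling.le_factorial_stirling m
    _ ≤ exp 1 * √((k : ℝ) + m) * (((k : ℝ) + m) / exp 1) ^ (k + m) * exp 1 ^ (k + m) := by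
        rw [hchoose]
        gcongr
    _ = exp 1 * √((k : ℝ) + m) * ((k : ℝ) + m) ^ (k + m) := by
        rw [div_pow]
        field_simp

lemma add_one_pow_le_exp_one_mul_pow (N : ℕ) : ((N : ℝ) + 1) ^ N ≤ exp 1 * (N : ℝ) ^ N := by
  rcases eq_or_ne N 0 with rfl | hN
  · simp
  calc ((N : ℝ) + 1) ^ N = (1 + (N : ℝ)⁻¹) ^ N * (N : ℝ) ^ N := by
        rw [← mul_pow]
        field_simp
    _ ≤ exp 1 * (N : ℝ) ^ N := by
        gcongr
        exact one_add_inv_pow_le_exp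

lemma exp_one_sq_le_four_mul_pi : exp 1 ^ 2 ≤ 4 * π := by
  have := exp_one_lt_d9
  nlinarith [pi_gt_three, exp_pos 1]

lemma choose_mul_pow_mul_pow_le {j m : ℕ} (hm : m ≠ 0) :
    ((j + 1 + m).choose (j + 1) : ℝ) * (m / (m + j)) ^ m * (j / (m + j)) ^ j ≤
      2 * ((j + 1 + m) * √(j + 1 + m)) / ((j + 1) * √(j + 1) * √m) := by
  set C : ℝ := (((j + 1 + m).choose (j + 1) : ℕ) : ℝ)
  set n : ℝ := (j : ℝ) + 1 + m
  have hchoose := two_pi_mul_sqrt_mul_choose_le (j + 1) m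
  have hpow := add_one_pow_le_exp_one_mul_pow (m + j)
  push_cast at hchoose hpow
  have hj : (j : ℝ) ^ j * (j + 1) ≤ ((j : ℝ) + 1) ^ (j + 1) := by
    rw [pow_succ]
    gcongr
    linarith
  have hscaled : 2 * π * (C * m ^ m * j ^ j * ((j + 1) * √(j + 1) * √m)) ≤
      2 * π * (2 * (n * √n) * (m + j) ^ (m + j)) :=
    calc 2 * π * (C * m ^ m * j ^ j * ((j + 1) * √(j + 1) * √m))
        = 2 * π * √(j + 1) * √m * C * (j ^ j * (j + 1)) * m ^ m := by ring
      _ ≤ 2 * π * √(j + 1) * √m * C * (j + 1) ^ (j + 1) * m ^ m := by gcongr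
      _ ≤ exp 1 * √n * n ^ (j + 1 + m) := hchoose
      _ = exp 1 * √n * n * ((m : ℝ) + j + 1) ^ (m + j) := by
        rw [show j + 1 + m = (m + j) + 1 by ring, pow_succ, show (m : ℝ) + j + 1 = n by ring]
        ring
      _ ≤ exp 1 * √n * n * (exp 1 * (m + j) ^ (m + j)) := by gcongr
      _ = exp 1 ^ 2 * (n * √n * (m + j) ^ (m + j)) := by ring
      _ ≤ 4 * π * (n * √n * (m + j) ^ (m + j)) := by gcongr; exact exp_one_sq_le_four_mul_pi
      _ = 2 * π * (2 * (n * √n) * (m + j) ^ (m + j)) := by ring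
  have hcross := le_of_mul_le_mul_left hscaled (by positivity)
  calc C * (m / (m + j)) ^ m * (j / (m + j)) ^ j
      = C * m ^ m * j ^ j / ((m : ℝ) + j) ^ (m + j) := by
        rw [div_pow, div_pow, pow_add]
        field_simp
    _ ≤ 2 * (n * √n) / ((j + 1) * √(j + 1) * √m) := by
        rw [div_le_div_iff₀ (by positivity) (by positivity)]
        linarith

lemma mul_sqrt_div_mul_sqrt_mul_sqrt_eq_rpow {a b c : ℝ} (ha : 0 ≤ a) (hb : 0 ≤ b) (hc : 0 ≤ c) :
    a * √a / (b * √b * √c) = a ^ ((3 : ℝ) / 2) * b ^ (-(3 : ℝ) / 2) * c ^ (-(1 : ℝ) / 2) := by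
  have h32 : ∀ {z : ℝ}, 0 ≤ z → z ^ ((3 : ℝ) / 2) = z * √z := fun hz => by
    rw [show (3 : ℝ) / 2 = 1 + 1 / 2 by norm_num, rpow_add' hz (by norm_num), rpow_one,
      sqrt_eq_rpow]
  rw [neg_div, neg_div, rpow_neg hb, rpow_neg hc, h32 ha, h32 hb, ← sqrt_eq_rpow]
  field_simp

/-- Lemma 6 (bound on `B₁`): with `y_{n,k} = (n−k)/(n−1)`, `ε = (x − y_{n,k})/y_{n,k}` and
`q = n^{3/2} k^{-3/2} (n−k)^{-1/2}`, for all `1 ≤ k < n` and `x ∈ [0,1]`: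
`(1/k)·C(n,k)·x^{n-k}(1-x)^{k-1} ≤ (C·q/k)·exp(−min{|ε|,1/4}²·(n−k)/4)`. -/
theorem B1_bound :
    ∃ C > (0 : ℝ), ∀ n k : ℕ, 1 ≤ k → k < n → ∀ x : ℝ, x ∈ Set.Icc (0 : ℝ) 1 →
      (1 / (k : ℝ)) * (n.choose k : ℝ) * x ^ (n - k) * (1 - x) ^ (k - 1) ≤
        C * ((n : ℝ) ^ ((3 : ℝ) / 2) * (k : ℝ) ^ (-(3 : ℝ) / 2) *
              ((n : ℝ) - k) ^ (-(1 : ℝ) / 2)) / (k : ℝ) *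
          Real.exp
            (-((min |(x - ((n : ℝ) - k) / ((n : ℝ) - 1)) / (((n : ℝ) - k) / ((n : ℝ) - 1))|
                  (1 / 4)) ^ 2 * ((n : ℝ) - k) / 4)) := by
  refine ⟨2, two_pos, ?_⟩
  rintro n k hk hkn x ⟨hx₀, hx₁⟩
  obtain ⟨j, rfl⟩ := Nat.exists_eq_add_of_le' hk
  obtain ⟨m, rfl⟩ := Nat.exists_eq_add_of_le hkn.le
  have hm : m ≠ 0 := by omega
  have hnk : ((j + 1 + m : ℕ) : ℝ) - ((j + 1 : ℕ) : ℝ) = m := by push_cast; ring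
  have hn1 : ((j + 1 + m : ℕ) : ℝ) - 1 = m + j := by push_cast; ring
  rw [Nat.add_sub_cancel_left, Nat.add_sub_cancel, hnk, hn1]
  calc 1 / ((j + 1 : ℕ) : ℝ) * ((j + 1 + m).choose (j + 1) : ℝ) * x ^ m * (1 - x) ^ j
      ≤ 1 / ((j + 1 : ℕ) : ℝ) * ((j + 1 + m).choose (j + 1) : ℝ) *
          ((m / (m + j)) ^ m * (j / (m + j)) ^ j *
            exp (-(min |(x - m / (m + j)) / (m / (m + j))| (1 / 4) ^ 2 * m / 4))) := by
        rw [mul_assoc _ (x ^ m)]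
        exact mul_le_mul_of_nonneg_left (pow_mul_one_sub_pow_le_mul_exp hm hx₀ hx₁) (by positivity)
    _ = ((j + 1 + m).choose (j + 1) : ℝ) * (m / (m + j)) ^ m * (j / (m + j)) ^ j /
          ((j + 1 : ℕ) : ℝ) *
            exp (-(min |(x - m / (m + j)) / (m / (m + j))| (1 / 4) ^ 2 * m / 4)) := by ring
    _ ≤ _ := by
        gcongr ?_ / _ * _
        rw [← mul_sqrt_div_mul_sqrt_mul_sqrt_eq_rpow (by positivity) (by positivity)
          (by positivity)]
        push_cast
        exact (choose_mul_pow_mul_pow_le hm).trans_eq (mul_div_assoc _ _ _)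
end

section
/- There exists a universal constant C > 0 such that for all integers 1 ≤ k < n the following holds. Set y_{n,k} = (n−k)/(n−1), φ(y) = y^{n-k}(1-y)^{k-1}, and q = n^{3/2} k^{-3/2} (n−k)^{-1/2}. If ε > 0 and x ∈ [0,1] satisfies x > y_{n,k}(1+ε), then C(n,k)·∫_x^1 φ(y) dy ≤ C·q·exp( − min{ε, 1/4}² · (n−k) / 4 ), where C(n,k) is the binomial coefficient n choose k. -/
/-!
With `p = n - k` and `q = k - 1`, the integrand `y ^ p * (1 - y) ^ q` is unimodal with mode
`p / (p + q) = y_{n,k}`. For `m = min ε (1/4)` and `x₀ = y_{n,k} (1 + m) ≤ x`, the integral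
over `[x, 1]` is therefore at most `(1 - x₀) φ(x₀)`. Leaving the mode costs the factor
`(1 + m) ^ p (1 - m p / q) ^ (q + 1) ≤ exp ((m - m² / 4) p) exp (-m p)`, while at the mode the
two-sided Stirling bounds `√π ≤ stirlingSeq j ≤ e / √2` show that the central binomial term
`C(p + q, p) y ^ p (1 - y) ^ q` is at most `√((p + q) / (p q))`. The constant is `C = 1`.
-/

open Real Nat

namespace Stirling

lemma stirlingSeq_le_exp_one_div_sqrt_two {n : ℕ} (hn : n ≠ 0) :
    stirlingSeq n ≤ exp 1 / √2 := by
  obtain ⟨n, rfl⟩ := Nat.exists_eq_succ_of_ne_zero hn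
  simpa using stirlingSeq'_antitone (Nat.zero_le n)

lemma factorial_eq_stirlingSeq_mul {n : ℕ} (hn : n ≠ 0) :
    (n ! : ℝ) = stirlingSeq n * (√(2 * n) * (n / exp 1) ^ n) := by
  have : 0 < √(2 * n : ℝ) * (n / exp 1) ^ n := by
    have : (0 : ℝ) < n := by positivity
    positivity
  rw [stirlingSeq, div_mul_cancel₀ _ this.ne']

lemma add_choose_mul_pow_mul_pow_mul_stirlingSeq {a b : ℕ} (ha : a ≠ 0) (hb : b ≠ 0) :
    ((a + b).choose a : ℝ) * ((a / (a + b)) ^ a * (b / (a + b)) ^ b) *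
        (stirlingSeq a * stirlingSeq b) * (√(2 * a) * √(2 * b)) =
      stirlingSeq (a + b) * √(2 * (a + b)) := by
  have h := congrArg (Nat.cast (R := ℝ)) (Nat.add_choose_mul_factorial_mul_factorial a b)
  rw [← Nat.choose_symm_add] at h
  push_cast at h
  rw [factorial_eq_stirlingSeq_mul ha, factorial_eq_stirlingSeq_mul hb,
    factorial_eq_stirlingSeq_mul (by omega)] at h
  have hA : (0 : ℝ) < a := by positivity
  have hB : (0 : ℝ) < b := by positivity
  have hP : (0 : ℝ) < (a + b) ^ (a + b) / exp 1 ^ (a + b) := by positivity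
  refine mul_right_cancel₀ hP.ne' ?_
  push_cast at h
  simp only [div_pow, pow_add] at h ⊢
  field_simp at h ⊢
  linear_combination h

end Stirling

open Stirling in
lemma add_choose_mul_pow_mul_pow_le {a b : ℕ} (ha : a ≠ 0) (hb : b ≠ 0) :
    ((a + b).choose a : ℝ) * ((a / (a + b)) ^ a * (b / (a + b)) ^ b) ≤
      √((a + b) / (a * b)) := by
  set T := ((a + b).choose a : ℝ) * ((a / (a + b)) ^ a * (b / (a + b)) ^ b)
  have hT : 0 ≤ T := by positivity
  have hpi : π ≤ stirlingSeq a * stirlingSeq b := by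
    have := mul_le_mul (sqrt_pi_le_stirlingSeq ha) (sqrt_pi_le_stirlingSeq hb) (sqrt_nonneg _)
      ((sqrt_nonneg _).trans (sqrt_pi_le_stirlingSeq ha))
    rwa [mul_self_sqrt pi_pos.le] at this
  have hsq : √(2 * a : ℝ) * √(2 * b) = 2 * √(a * b) := by
    rw [← sqrt_mul (by positivity), show (2 * a * (2 * b) : ℝ) = 2 ^ 2 * (a * b) by ring,
      sqrt_mul (by positivity), sqrt_sq (by norm_num)]
  have hkey : T * √(a * b) * (2 * π) ≤ exp 1 * √(a + b) := by
    calc T * √(a * b) * (2 * π)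
        ≤ T * (stirlingSeq a * stirlingSeq b) * (√(2 * a) * √(2 * b)) := by
          rw [hsq]; nlinarith [mul_nonneg hT (sqrt_nonneg (a * b : ℝ))]
      _ = stirlingSeq (a + b) * √2 * √(a + b) := by
          rw [add_choose_mul_pow_mul_pow_mul_stirlingSeq ha hb, sqrt_mul zero_le_two]; ring
      _ ≤ exp 1 / √2 * √2 * √(a + b) := by
          gcongr; exact stirlingSeq_le_exp_one_div_sqrt_two (by omega)
      _ = exp 1 * √(a + b) := by field_simp
  rw [sqrt_div (by positivity), le_div_iff₀ (by positivity)]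
  nlinarith [exp_one_lt_d9, pi_gt_three, mul_nonneg hT (sqrt_nonneg (a * b : ℝ)),
    sqrt_nonneg (a + b : ℝ)]

lemma antitoneOn_pow_mul_one_sub_pow {p q : ℕ} (hp : p ≠ 0) (hq : q ≠ 0) :
    AntitoneOn (fun y : ℝ => y ^ p * (1 - y) ^ q) (Set.Icc (p / (p + q)) 1) := by
  have hderiv (y : ℝ) : HasDerivAt (fun y : ℝ => y ^ p * (1 - y) ^ q)
      (y ^ (p - 1) * (1 - y) ^ (q - 1) * (p * (1 - y) - q * y)) y := by
    refine ((hasDerivAt_pow p y).fun_mul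
      (((hasDerivAt_id' y).const_sub 1).fun_pow q)).congr_deriv ?_
    obtain ⟨p, rfl⟩ := Nat.exists_eq_add_one_of_ne_zero hp
    obtain ⟨q, rfl⟩ := Nat.exists_eq_add_one_of_ne_zero hq
    push_cast
    ring
  refine antitoneOn_of_deriv_nonpos (convex_Icc _ _) (by fun_prop)
    (fun y _ => (hderiv y).differentiableAt.differentiableWithinAt) fun y hy => ?_
  rw [interior_Icc] at hy
  obtain ⟨hy0, hy1⟩ := hy
  have hpq : (0 : ℝ) < p + q := by positivity
  have hmode : p ≤ y * (p + q) := (div_lt_iff₀ hpq).mp hy0 |>.le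
  have hy : 0 ≤ y := le_trans (by positivity) hy0.le
  rw [(hderiv y).deriv]
  have hy1' : 0 ≤ 1 - y := by linarith
  exact mul_nonpos_of_nonneg_of_nonpos (by positivity) (by nlinarith)

lemma intervalIntegral_le_sub_mul_of_antitoneOn {f : ℝ → ℝ} {a b : ℝ} (hab : a ≤ b)
    (hf : AntitoneOn f (Set.Icc a b)) : ∫ y in a..b, f y ≤ (b - a) * f a := by
  have h := intervalIntegral.integral_mono_on hab
    (Set.uIcc_of_le hab ▸ hf).intervalIntegrable
    (intervalIntegrable_const (μ := MeasureTheory.volume))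
    fun y hy => hf ⟨le_rfl, hab⟩ hy hy.1
  rwa [intervalIntegral.integral_const, smul_eq_mul] at h

lemma one_add_le_exp_sub_sq_div_four {m : ℝ} (hm0 : 0 ≤ m) (hm : m ≤ 1 / 4) :
    1 + m ≤ exp (m - m ^ 2 / 4) := by
  set u := (m - m ^ 2 / 4) / 3
  have hu : 5 * m / 16 ≤ u := by simp only [u]; nlinarith
  have hu0 : 0 ≤ u := by linarith
  have hu3 : 3 * u = m - m ^ 2 / 4 := by simp only [u]; ring
  calc 1 + m ≤ (1 + u) ^ 3 := by
        nlinarith [mul_self_le_mul_self (by positivity) hu, pow_nonneg hu0 3]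
    _ ≤ exp u ^ 3 := by gcongr; linarith [add_one_le_exp u]
    _ = exp (m - m ^ 2 / 4) := by rw [← exp_nat_mul, Nat.cast_ofNat, hu3]

lemma pow_mul_one_sub_pow_succ_le_mul_exp {p q : ℕ} (hq : q ≠ 0) {m : ℝ} (hm0 : 0 ≤ m)
    (hm : m ≤ 1 / 4) (hx : p / (p + q) * (1 + m) ≤ 1) :
    (p / (p + q) * (1 + m)) ^ p * (1 - p / (p + q) * (1 + m)) ^ (q + 1) ≤
      (p / (p + q)) ^ p * (q / (p + q)) ^ (q + 1) * exp (-(m ^ 2 * p / 4)) := by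
  have hQ : (0 : ℝ) < q := by positivity
  have hpq : (0 : ℝ) < p + q := by positivity
  have hmp : m * p ≤ q := by
    rw [div_mul_eq_mul_div, div_le_one hpq] at hx
    linarith
  have hsplit : 1 - p / (p + q) * (1 + m) = q / (p + q) * (1 - m * p / q) := by
    field_simp
    ring
  have hshift : 0 ≤ 1 - m * p / q := by rw [sub_nonneg, div_le_one hQ]; exact hmp
  have hgrow : (1 + m) ^ p ≤ exp ((m - m ^ 2 / 4) * p) := by
    calc (1 + m) ^ p ≤ exp (m - m ^ 2 / 4) ^ p := by
          gcongr
          exact one_add_le_exp_sub_sq_div_four hm0 hm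
      _ = exp ((m - m ^ 2 / 4) * p) := by rw [← exp_nat_mul, mul_comm]
  have hshift_le_one : 1 - m * p / q ≤ 1 := by
    have : 0 ≤ m * p / q := by positivity
    linarith
  have hdecay : (1 - m * p / q) ^ (q + 1) ≤ exp (-(m * p)) :=
    calc (1 - m * p / q) ^ (q + 1) ≤ (1 - m * p / q) ^ q :=
          pow_le_pow_of_le_one hshift hshift_le_one q.le_succ
      _ ≤ exp (-(m * p)) := one_sub_div_pow_le_exp_neg hmp
  calc (p / (p + q) * (1 + m)) ^ p * (1 - p / (p + q) * (1 + m)) ^ (q + 1)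
      = (p / (p + q)) ^ p * (q / (p + q)) ^ (q + 1) *
          ((1 + m) ^ p * (1 - m * p / q) ^ (q + 1)) := by
        rw [hsplit]; simp only [mul_pow]; ring
    _ ≤ (p / (p + q)) ^ p * (q / (p + q)) ^ (q + 1) *
          (exp ((m - m ^ 2 / 4) * p) * exp (-(m * p))) := by gcongr
    _ = (p / (p + q)) ^ p * (q / (p + q)) ^ (q + 1) * exp (-(m ^ 2 * p / 4)) := by
          rw [← exp_add]; ring_nf

lemma add_succ_choose_succ_mul_pow_mul_pow_le {p q : ℕ} (hp : p ≠ 0) (hq : q ≠ 0) :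
    ((p + q + 1).choose (q + 1) : ℝ) * ((p / (p + q)) ^ p * (q / (p + q)) ^ (q + 1)) ≤
      (p + q + 1) / (q + 1) / √p := by
  have hP : (0 : ℝ) < p := by positivity
  have hQ : (0 : ℝ) < q := by positivity
  have hchoose :
      ((p + q + 1).choose (q + 1) : ℝ) = (p + q + 1) / (q + 1) * (p + q).choose p := by
    have h := congrArg (Nat.cast (R := ℝ)) (Nat.add_one_mul_choose_eq (p + q) q)
    push_cast at h
    rw [Nat.choose_symm_add, div_mul_eq_mul_div, eq_div_iff (by positivity)]
    linarith
  have hsqrt : √((p + q) / (p * q)) * (q / (p + q)) ≤ 1 / √p := by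
    have hpq : (0 : ℝ) < p + q := by positivity
    rw [← sqrt_sq (by positivity : (0 : ℝ) ≤ q / (p + q)), ← sqrt_mul (by positivity), one_div,
      ← sqrt_inv]
    gcongr
    rw [show (p + q) / (p * q) * (q / (p + q)) ^ 2 = q / (p + q) * (p : ℝ)⁻¹ by
      field_simp]
    exact mul_le_of_le_one_left (by positivity) ((div_le_one hpq).mpr (by linarith))
  calc ((p + q + 1).choose (q + 1) : ℝ) * ((p / (p + q)) ^ p * (q / (p + q)) ^ (q + 1))
      = (p + q + 1) / (q + 1) *
          (((p + q).choose p : ℝ) * ((p / (p + q)) ^ p * (q / (p + q)) ^ q) * (q / (p + q))) := by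
        rw [hchoose]; ring
    _ ≤ (p + q + 1) / (q + 1) * (√((p + q) / (p * q)) * (q / (p + q))) := by
        gcongr; exact add_choose_mul_pow_mul_pow_le hp hq
    _ ≤ (p + q + 1) / (q + 1) * (1 / √p) := mul_le_mul_of_nonneg_left hsqrt (by positivity)
    _ = (p + q + 1) / (q + 1) / √p := by ring

lemma choose_mul_integral_pow_mul_one_sub_pow_le {p q : ℕ} (hp : p ≠ 0) (hq : q ≠ 0) {m x : ℝ}
    (hm0 : 0 ≤ m) (hm : m ≤ 1 / 4) (hx : p / (p + q) * (1 + m) ≤ x) (hx1 : x ≤ 1) :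
    ((p + q + 1).choose (q + 1) : ℝ) * ∫ y in x..1, y ^ p * (1 - y) ^ q ≤
      (p + q + 1) / (q + 1) / √p * exp (-(m ^ 2 * p / 4)) := by
  set x₀ := p / (p + q) * (1 + m)
  have hanti := antitoneOn_pow_mul_one_sub_pow hp hq
  have hx₀ : x₀ ∈ Set.Icc (p / (p + q) : ℝ) 1 :=
    ⟨le_mul_of_one_le_right (by positivity) (by linarith), hx.trans hx1⟩
  have hxI : x ∈ Set.Icc (p / (p + q) : ℝ) 1 := ⟨hx₀.1.trans hx, hx1⟩
  have hint : ∫ y in x..1, y ^ p * (1 - y) ^ q ≤ x₀ ^ p * (1 - x₀) ^ (q + 1) := by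
    have hx0 : 0 ≤ x := (by positivity : (0 : ℝ) ≤ p / (p + q)).trans hxI.1
    have h1x : 0 ≤ 1 - x := by linarith
    have h1x₀ : 0 ≤ 1 - x₀ := by linarith [hx₀.2]
    calc ∫ y in x..1, y ^ p * (1 - y) ^ q ≤ (1 - x) * (x ^ p * (1 - x) ^ q) :=
          intervalIntegral_le_sub_mul_of_antitoneOn hx1
            (hanti.mono (Set.Icc_subset_Icc_left hxI.1))
      _ ≤ (1 - x₀) * (x₀ ^ p * (1 - x₀) ^ q) :=
          mul_le_mul (by linarith) (hanti hx₀ hxI hx) (by positivity) h1x₀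
      _ = x₀ ^ p * (1 - x₀) ^ (q + 1) := by ring
  calc ((p + q + 1).choose (q + 1) : ℝ) * ∫ y in x..1, y ^ p * (1 - y) ^ q
      ≤ (p + q + 1).choose (q + 1) * (x₀ ^ p * (1 - x₀) ^ (q + 1)) := by gcongr
    _ ≤ (p + q + 1).choose (q + 1) *
          ((p / (p + q)) ^ p * (q / (p + q)) ^ (q + 1) * exp (-(m ^ 2 * p / 4))) :=
        mul_le_mul_of_nonneg_left (pow_mul_one_sub_pow_succ_le_mul_exp hq hm0 hm (hx.trans hx1))
          (by positivity)
    _ = (p + q + 1).choose (q + 1) * ((p / (p + q)) ^ p * (q / (p + q)) ^ (q + 1)) *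
          exp (-(m ^ 2 * p / 4)) := by ring
    _ ≤ (p + q + 1) / (q + 1) / √p * exp (-(m ^ 2 * p / 4)) := by
        gcongr
        exact add_succ_choose_succ_mul_pow_mul_pow_le hp hq

lemma div_div_sqrt_le_rpow {n k r : ℝ} (hk : 0 < k) (hkn : k ≤ n) (hr : 0 < r) :
    n / k / √r ≤ n ^ ((3 : ℝ) / 2) * k ^ (-(3 : ℝ) / 2) * r ^ (-(1 : ℝ) / 2) := by
  rw [neg_div, rpow_neg hk.le, neg_div, rpow_neg hr.le, ← sqrt_eq_rpow, ← div_eq_mul_inv,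
    ← div_eq_mul_inv, ← div_rpow (hk.le.trans hkn) hk.le]
  gcongr
  exact self_le_rpow_of_one_le ((one_le_div hk).mpr hkn) (by norm_num)

/-- Lemma 7 (bound on `B₂`, supercritical side): with `y_{n,k} = (n−k)/(n−1)`,
`φ(y) = y^{n-k}(1-y)^{k-1}` and `q = n^{3/2} k^{-3/2} (n−k)^{-1/2}`, if `ε > 0` and
`x ∈ [0,1]` with `x > y_{n,k}(1+ε)`, then
`C(n,k)·∫_x^1 φ ≤ C·q·exp(−min{ε,1/4}²·(n−k)/4)`. -/
theorem B2_bound_supercritical :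
    ∃ C > (0 : ℝ), ∀ n k : ℕ, 1 ≤ k → k < n → ∀ ε : ℝ, 0 < ε →
      ∀ x : ℝ, x ∈ Set.Icc (0 : ℝ) 1 →
        ((n : ℝ) - k) / ((n : ℝ) - 1) * (1 + ε) < x →
        (n.choose k : ℝ) * (∫ y in x..(1 : ℝ), y ^ (n - k) * (1 - y) ^ (k - 1)) ≤
          C * ((n : ℝ) ^ ((3 : ℝ) / 2) * (k : ℝ) ^ (-(3 : ℝ) / 2) *
                ((n : ℝ) - k) ^ (-(1 : ℝ) / 2)) *
            Real.exp (-((min ε (1 / 4)) ^ 2 * ((n : ℝ) - k) / 4)) := by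
  refine ⟨1, one_pos, fun n k hk hkn ε hε x hx01 hx => ?_⟩
  obtain ⟨q, rfl⟩ : ∃ q, k = q + 1 := ⟨k - 1, by omega⟩
  obtain ⟨p, rfl⟩ : ∃ p, n = p + q + 1 := ⟨n - q - 1, by omega⟩
  have hp : p ≠ 0 := by omega
  have hP : (0 : ℝ) < p := by positivity
  have hnk : ((p + q + 1 : ℕ) : ℝ) - (q + 1 : ℕ) = p := by push_cast; ring
  have hden : ((p + q + 1 : ℕ) : ℝ) - 1 = p + q := by push_cast; ring
  rw [hnk, hden] at hx
  rw [hnk, show p + q + 1 - (q + 1) = p by omega, Nat.add_sub_cancel, one_mul]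
  have hq : q ≠ 0 := by
    rintro rfl
    simp only [Nat.cast_zero, add_zero, div_self hP.ne', one_mul] at hx
    linarith [hx01.2]
  have hm := min_le_right ε (1 / 4)
  calc ((p + q + 1).choose (q + 1) : ℝ) * ∫ y in x..1, y ^ p * (1 - y) ^ q
      ≤ (p + q + 1) / (q + 1) / √p * exp (-(min ε (1 / 4) ^ 2 * p / 4)) :=
        choose_mul_integral_pow_mul_one_sub_pow_le hp hq (le_min hε.le (by norm_num)) hm
          ((mul_le_mul_of_nonneg_left (by linarith [min_le_left ε (1 / 4)]) (by positivity)).trans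
            hx.le) hx01.2
    _ ≤ _ := by
        refine mul_le_mul_of_nonneg_right ?_ (exp_pos _).le
        exact_mod_cast div_div_sqrt_le_rpow (by positivity) (by linarith) hP
end

section
/- Let n and k be integers with 1 ≤ k < n, set y_{n,k} = (n−k)/(n−1) and ψ_{n,k}(y) = (n−k)·log y + (k−1)·log(1−y). Then for every real ε such that 0 < y_{n,k}(1+ε) < 1, ψ_{n,k}( y_{n,k}(1+ε) ) ≤ ψ_{n,k}( y_{n,k} ) − (n−k)·min{|ε|, 1/4}² / 4. -/
/-!
Write `a = n - k`, `b = k - 1` and `y = a / (a + b)`. Then `1 - y (1 + ε) = (b - a ε) / (a + b)`, so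
`ψ(y (1 + ε)) - ψ(y) = a log (1 + ε) + b log (1 - a ε / b)`. The second term is at most `-a ε`
by `log t ≤ t - 1`, which cancels the linear part of the sharpened bound
`log (1 + ε) ≤ ε - min (|ε|, 1/4)² / 4`.
-/

open Real

namespace Real

/-- With `s = √(1 + x)`, `log (1 + x) ≤ 2 (s - 1)` and
`x - x² / 4 - 2 (s - 1) = (s - 1)² (1 - (s + 1)² / 4) ≥ 0` because `s ≤ 1`. -/
theorem log_one_add_le_sub_sq_div_four {x : ℝ} (hx : -1 < x) (hx0 : x ≤ 0) :
    log (1 + x) ≤ x - x ^ 2 / 4 := by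
  have hpos : 0 < 1 + x := by linarith
  set s := √(1 + x)
  have hs : 0 < s := sqrt_pos.mpr hpos
  have hs_sq : s ^ 2 = 1 + x := sq_sqrt hpos.le
  have hs_le : s ≤ 1 := by nlinarith
  have hlog : log (1 + x) = 2 * log s := by rw [← hs_sq, log_pow]; norm_num
  have hlog_le : log s ≤ s - 1 := log_le_sub_one_of_pos hs
  nlinarith [mul_nonneg (sq_nonneg (s - 1)) (by nlinarith : 0 ≤ 4 - (s + 1) ^ 2)]

theorem log_le_half_sub_inv {y : ℝ} (hy : 1 ≤ y) : log y ≤ (y - y⁻¹) / 2 := by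
  rw [← sinh_log (by linarith)]
  exact self_le_sinh_iff.mpr (log_nonneg hy)

theorem log_one_add_le_sub_min_sq {x : ℝ} (hx : -1 < x) :
    log (1 + x) ≤ x - min |x| (1 / 4) ^ 2 / 4 := by
  set m := min |x| (1 / 4)
  have hm0 : 0 ≤ m := le_min (abs_nonneg x) (by norm_num)
  have hm_abs : m ≤ |x| := min_le_left _ _
  have hm_quarter : m ≤ 1 / 4 := min_le_right _ _
  rcases le_or_gt x 0 with hneg | hpos
  · have hm_sq : m ^ 2 ≤ x ^ 2 := by
      rw [← sq_abs x]; exact pow_le_pow_left₀ hm0 hm_abs 2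
    linarith [log_one_add_le_sub_sq_div_four hx hneg]
  · have hlog := log_le_half_sub_inv (by linarith : 1 ≤ 1 + x)
    have hgap : x - ((1 + x) - (1 + x)⁻¹) / 2 = x ^ 2 / (2 * (1 + x)) := by
      field_simp; ring
    have hm_x : m ≤ x := abs_of_pos hpos ▸ hm_abs
    have hm_sq : m ^ 2 / 4 ≤ x ^ 2 / (2 * (1 + x)) := by
      rw [div_le_div_iff₀ (by norm_num) (by positivity)]
      have hm_sq_x : m ^ 2 ≤ x ^ 2 := pow_le_pow_left₀ hm0 hm_x 2
      have hm_sq_quarter : m ^ 2 ≤ x / 4 := by nlinarith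
      nlinarith [mul_le_mul_of_nonneg_left hm_sq_quarter hpos.le]
    linarith

end Real

theorem mul_log_sub_div_le {b t N : ℝ} (hb : 0 ≤ b) (ht : t < b) (hN : N ≠ 0) :
    b * log ((b - t) / N) ≤ b * log (b / N) - t := by
  rcases hb.eq_or_lt with rfl | hb
  · simpa using ht.le
  have hsplit : (b - t) / N = (b - t) / b * (b / N) := by field_simp
  have hratio : 0 < (b - t) / b := div_pos (sub_pos.mpr ht) hb
  have hlog : log ((b - t) / b) ≤ (b - t) / b - 1 := log_le_sub_one_of_pos hratio
  rw [hsplit, log_mul hratio.ne' (div_ne_zero hb.ne' hN), mul_add]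
  have : b * ((b - t) / b - 1) = -t := by field_simp; ring
  nlinarith [mul_le_mul_of_nonneg_left hlog hb.le]

theorem mul_log_add_mul_log_one_sub_le {a b ε : ℝ} (ha : 0 < a) (hb : 0 ≤ b)
    (h0 : 0 < a / (a + b) * (1 + ε)) (h1 : a / (a + b) * (1 + ε) < 1) :
    a * log (a / (a + b) * (1 + ε)) + b * log (1 - a / (a + b) * (1 + ε)) ≤
      a * log (a / (a + b)) + b * log (1 - a / (a + b)) - a * min |ε| (1 / 4) ^ 2 / 4 := by
  have hab : 0 < a + b := by linarith
  have hy : 0 < a / (a + b) := div_pos ha hab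
  have hε : 0 < 1 + ε := pos_of_mul_pos_right h0 hy.le
  have hcompl : 1 - a / (a + b) * (1 + ε) = (b - a * ε) / (a + b) := by field_simp; ring
  have hcompl_peak : 1 - a / (a + b) = b / (a + b) := by field_simp; ring
  have haε : a * ε < b := by
    have := (div_pos_iff_of_pos_right hab).mp (hcompl ▸ sub_pos.mpr h1)
    linarith
  have hlog_a := mul_le_mul_of_nonneg_left (log_one_add_le_sub_min_sq (by linarith : -1 < ε)) ha.le
  have hlog_b := mul_log_sub_div_le hb haε hab.ne'
  rw [log_mul hy.ne' hε.ne', hcompl, hcompl_peak]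
  linarith

/-- Concavity estimate for `ψ_{n,k}(y) = (n−k)·log y + (k−1)·log(1−y)` at
`y = y_{n,k}(1+ε)` where `y_{n,k} = (n−k)/(n−1)`:
`ψ(y_{n,k}(1+ε)) ≤ ψ(y_{n,k}) − (n−k)·min{|ε|,1/4}²/4`. -/
theorem psi_peak_bound (n k : ℕ) (hk : 1 ≤ k) (hkn : k < n) (ε : ℝ)
    (h0 : 0 < ((n : ℝ) - k) / ((n : ℝ) - 1) * (1 + ε))
    (h1 : ((n : ℝ) - k) / ((n : ℝ) - 1) * (1 + ε) < 1) :
    ((n : ℝ) - k) * Real.log (((n : ℝ) - k) / ((n : ℝ) - 1) * (1 + ε)) +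
        ((k : ℝ) - 1) * Real.log (1 - ((n : ℝ) - k) / ((n : ℝ) - 1) * (1 + ε)) ≤
      ((n : ℝ) - k) * Real.log (((n : ℝ) - k) / ((n : ℝ) - 1)) +
          ((k : ℝ) - 1) * Real.log (1 - ((n : ℝ) - k) / ((n : ℝ) - 1)) -
        ((n : ℝ) - k) * (min |ε| (1 / 4)) ^ 2 / 4 := by
  have ha : 0 < (n : ℝ) - k := sub_pos.mpr (by exact_mod_cast hkn)
  have hb : 0 ≤ (k : ℝ) - 1 := sub_nonneg.mpr (by exact_mod_cast hk)
  have hsum : (n : ℝ) - 1 = ((n : ℝ) - k) + ((k : ℝ) - 1) := by ring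
  rw [hsum] at h0 h1 ⊢
  exact mul_log_add_mul_log_one_sub_le ha hb h0 h1
end
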